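/- arXiv:1804.02922 — 3 statements merged into one kernel-verified Lean document; each statement's English description precedes it below -/
import Mathlib

section
/- With R, p, e₀, φ and the ideals σ_n(φ, 𝔟, μ) as in the context, let 𝔞 ⊆ R be an ideal, m a positive integer, g ∈ 𝔞^m, and λ ≥ 0 a rational number. Then for every n ≥ 0 one has σ_n(φ, (g), λ/m) ⊆ σ_n(φ, 𝔞, λ), where (g) denotes the principal ideal generated by g. -/
/-- The filtration `σ_n(φ, 𝔟, μ)`: `σ_0 = R` and
`σ_n = ⨆ (e ≥ 1), span (φ^e '' (𝔟^⌈μ(p^{e·e₀}-1)⌉ · σ_{n-1}))`. -/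
def sigmaN {R : Type*} [CommRing R] (φ : R → R) (p e₀ : ℕ) (b : Ideal R) (μ : ℚ) :
    ℕ → Ideal R
  | 0 => ⊤
  | n + 1 => ⨆ e : ℕ, ⨆ _ : 1 ≤ e,
      Ideal.span (φ^[e] ''
        ((b ^ (⌈μ * ((p ^ (e * e₀) : ℕ) - 1 : ℚ)⌉).toNat * sigmaN φ p e₀ b μ n : Ideal R) : Set R))

/-- Lemma 1.3 at the level of the defining filtration: if `g ∈ 𝔞^m` then
`σ_n(φ, (g), λ/m) ⊆ σ_n(φ, 𝔞, λ)` for all `n`. -/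
theorem sigmaN_span_singleton_le {R : Type*} [CommRing R] (p : ℕ) (hp : p.Prime)
    (e₀ : ℕ) (he₀ : 0 < e₀) (φ : R → R)
    (hadd : ∀ x y : R, φ (x + y) = φ x + φ y)
    (hsl : ∀ r x : R, φ (r ^ p ^ e₀ * x) = r * φ x)
    (a : Ideal R) (m : ℕ) (hm : 0 < m) (g : R) (hg : g ∈ a ^ m)
    (lam : ℚ) (hlam : 0 ≤ lam) (n : ℕ) :
    sigmaN φ p e₀ (Ideal.span {g}) (lam / (m : ℚ)) n ≤ sigmaN φ p e₀ a lam n := by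
  induction n with
  | zero => simp [sigmaN]
  | succ n ih =>
    rw [sigmaN, sigmaN]
    refine iSup_mono fun e => iSup_mono fun he => ?_
    refine Ideal.span_mono (Set.image_mono ?_)
    have hpow : Ideal.span {g} ^ (⌈lam / (m : ℚ) * ((p ^ (e * e₀) : ℕ) - 1 : ℚ)⌉).toNat
        ≤ a ^ (⌈lam * ((p ^ (e * e₀) : ℕ) - 1 : ℚ)⌉).toNat := by
      set x : ℚ := ((p ^ (e * e₀) : ℕ) : ℚ) - 1 with hx
      have hx0 : 0 ≤ x := by
        have : (1 : ℕ) ≤ p ^ (e * e₀) := Nat.one_le_pow _ _ hp.pos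
        have : (1 : ℚ) ≤ ((p ^ (e * e₀) : ℕ) : ℚ) := by exact_mod_cast this
        linarith
      have hKb0 : 0 ≤ ⌈lam / (m : ℚ) * x⌉ := by
        have : (0 : ℚ) ≤ lam / (m : ℚ) * x :=
          mul_nonneg (div_nonneg hlam (by positivity)) hx0
        exact Int.ceil_nonneg this
      have hkey : ⌈lam * x⌉ ≤ (m : ℤ) * ⌈lam / (m : ℚ) * x⌉ := by
        rw [Int.ceil_le]
        push_cast
        have h1 : lam / (m : ℚ) * x ≤ (⌈lam / (m : ℚ) * x⌉ : ℚ) := Int.le_ceil _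
        have hm' : (0 : ℚ) < (m : ℚ) := by exact_mod_cast hm
        calc lam * x = (m : ℚ) * (lam / (m : ℚ) * x) := by field_simp
          _ ≤ (m : ℚ) * (⌈lam / (m : ℚ) * x⌉ : ℚ) := by
              exact mul_le_mul_of_nonneg_left h1 hm'.le
      have hnat : (⌈lam * x⌉).toNat ≤ m * (⌈lam / (m : ℚ) * x⌉).toNat := by
        rw [Int.toNat_le]
        push_cast
        rw [Int.toNat_of_nonneg hKb0]
        exact hkey
      calc Ideal.span {g} ^ (⌈lam / (m : ℚ) * x⌉).toNat
          ≤ (a ^ m) ^ (⌈lam / (m : ℚ) * x⌉).toNat := by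
            exact Ideal.pow_right_mono ((Ideal.span_singleton_le_iff_mem _).mpr hg) _
        _ = a ^ (m * (⌈lam / (m : ℚ) * x⌉).toNat) := by rw [← pow_mul]
        _ ≤ a ^ (⌈lam * x⌉).toNat := Ideal.pow_le_pow_right hnat
    exact Ideal.mul_mono hpow ih
end

section
/- With R, p, e₀, φ and the ideals σ_n(φ, 𝔟, μ) as in the context, let 𝔞 ⊆ R be an ideal and λ ≥ 1 a rational number. Then for every n ≥ 0 one has 𝔞 · σ_n(φ, 𝔞, λ − 1) ⊆ σ_n(φ, 𝔞, λ). -/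
section CartierLinear

variable {R : Type*} [CommRing R]

theorem iterate_pow_pow_mul {φ : R → R} {q : ℕ} (hφ : ∀ r x : R, φ (r ^ q * x) = r * φ x)
    (e : ℕ) (r x : R) : φ^[e] (r ^ q ^ e * x) = r * φ^[e] x := by
  induction e generalizing r with
  | zero => simp
  | succ e ih =>
    rw [Function.iterate_succ_apply', Function.iterate_succ_apply', pow_succ', pow_mul, ih, hφ]

theorem mul_span_image_le {f : R → R} {q : ℕ} (hf : ∀ r x : R, f (r ^ q * x) = r * f x)
    {a I J : Ideal R} (h : a ^ q * I ≤ J) :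
    a * Ideal.span (f '' I) ≤ Ideal.span (f '' J) := by
  refine Ideal.mul_le.2 fun r hr s hs => ?_
  induction hs using Submodule.span_induction with
  | mem _ hx =>
    obtain ⟨x, hx, rfl⟩ := hx
    rw [← hf]
    exact Ideal.subset_span ⟨_, h (Ideal.mul_mem_mul (Ideal.pow_mem_pow hr q) hx), rfl⟩
  | zero => simp
  | add x y _ _ hx hy => rw [mul_add]; exact Ideal.add_mem _ hx hy
  | smul c x _ hx => rw [smul_eq_mul, mul_left_comm]; exact Ideal.mul_mem_left _ c hx

end CartierLinear

theorem add_toNat_ceil_sub_one_mul {lam : ℚ} (hlam : 1 ≤ lam) {q : ℕ} (hq : 1 ≤ q) :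
    q + (⌈(lam - 1) * ((q : ℚ) - 1)⌉).toNat = (⌈lam * ((q : ℚ) - 1)⌉).toNat + 1 := by
  obtain ⟨m, rfl⟩ : ∃ m, q = m + 1 := ⟨q - 1, by omega⟩
  have hm : ((m + 1 : ℕ) : ℚ) - 1 = m := by push_cast; ring
  have hsplit : lam * (m : ℚ) = (lam - 1) * m + m := by ring
  have hnonneg : 0 ≤ ⌈(lam - 1) * (m : ℚ)⌉ :=
    Int.ceil_nonneg (mul_nonneg (by linarith) m.cast_nonneg)
  rw [hm, hsplit, Int.ceil_add_natCast]
  omega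

theorem mul_sigmaN_le_general {R : Type*} [CommRing R] (p : ℕ) (hp : p.Prime)
    (e₀ : ℕ) (φ : R → R)
    (hsl : ∀ r x : R, φ (r ^ p ^ e₀ * x) = r * φ x)
    (a : Ideal R) (lam : ℚ) (hlam : 1 ≤ lam) (n : ℕ) :
    a * sigmaN φ p e₀ a (lam - 1) n ≤ sigmaN φ p e₀ a lam n := by
  induction n with
  | zero => exact le_top
  | succ n ih =>
    rw [sigmaN, sigmaN, Ideal.mul_iSup]
    refine iSup_mono fun e => ?_
    rw [Ideal.mul_iSup]
    refine iSup_mono fun _ => ?_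
    have hq : p ^ (e * e₀) = (p ^ e₀) ^ e := by rw [← pow_mul, mul_comm]
    refine mul_span_image_le (q := p ^ (e * e₀)) (fun r x => ?_) ?_
    · rw [hq]; exact iterate_pow_pow_mul hsl e r x
    · calc a ^ p ^ (e * e₀) * (a ^ (⌈(lam - 1) * ((p ^ (e * e₀) : ℕ) - 1 : ℚ)⌉).toNat * _)
          = a ^ (⌈lam * ((p ^ (e * e₀) : ℕ) - 1 : ℚ)⌉).toNat * (a * _) := by
            rw [← mul_assoc, ← pow_add,
              add_toNat_ceil_sub_one_mul hlam (Nat.one_le_pow _ _ hp.pos), pow_succ, mul_assoc]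
        _ ≤ _ := Ideal.mul_mono_right ih

/-- The filtration-level form of Proposition 1.2(iv): for `λ ≥ 1`,
`𝔞 · σ_n(φ, 𝔞, λ - 1) ⊆ σ_n(φ, 𝔞, λ)` for all `n`. -/
theorem mul_sigmaN_le {R : Type*} [CommRing R] (p : ℕ) (hp : p.Prime)
    (e₀ : ℕ) (he₀ : 0 < e₀) (φ : R → R)
    (hadd : ∀ x y : R, φ (x + y) = φ x + φ y)
    (hsl : ∀ r x : R, φ (r ^ p ^ e₀ * x) = r * φ x)
    (a : Ideal R) (lam : ℚ) (hlam : 1 ≤ lam) (n : ℕ) :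
    a * sigmaN φ p e₀ a (lam - 1) n ≤ sigmaN φ p e₀ a lam n :=
  mul_sigmaN_le_general p hp e₀ φ hsl a lam hlam n
end

section
/- Let α be a type, let a, c: α → ℚ be finitely supported functions with c(x) ≥ 0 for all x, let λ > 0 be a rational number, and suppose that a(x) > −1 for every x with c(x) = 0. Then there exists a rational ε₀ > 0 such that for all rational ε with 0 < ε ≤ ε₀ and all x ∈ α one has min(⌈a(x) − λ·c(x) + ε·c(x)⌉, 0) = min(⌈(1 − ε)·(a(x) − λ·c(x))⌉, 0). -/
lemma ceil_add_small_aux (t δ : ℚ) (h0 : 0 < δ) (h1 : δ ≤ (⌊t⌋ : ℚ) + 1 - t) :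
    ⌈t + δ⌉ = ⌊t⌋ + 1 := by
  rw [Int.ceil_eq_iff]
  have hf := Int.floor_le t
  constructor
  · push_cast
    linarith
  · push_cast
    linarith

/-- The negative parts of the coefficients of `A = ⌈-Δ_Y - (λ-ε)F⌉` and
`B = ⌈-Δ_Y + εΔ_Y - (λ - ελ)F⌉` coincide for all sufficiently small `ε > 0`. -/
theorem min_ceil_perturb_eq_finsupp {α : Type*} (a c : α →₀ ℚ) (hc : ∀ x, 0 ≤ c x)
    (lam : ℚ) (hlam : 0 < lam) (ha : ∀ x, c x = 0 → -1 < a x) :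
    ∃ ε₀ : ℚ, 0 < ε₀ ∧ ∀ ε : ℚ, 0 < ε → ε ≤ ε₀ → ∀ x : α,
      min ⌈a x - lam * c x + ε * c x⌉ 0 = min ⌈(1 - ε) * (a x - lam * c x)⌉ 0 := by
  classical
  set f : α → ℚ := fun x =>
    if 0 < c x ∧ a x - lam * c x < 0 then
      ((⌊a x - lam * c x⌋ : ℚ) + 1 - (a x - lam * c x)) / (c x - (a x - lam * c x))
    else 1 with hf
  have hfpos : ∀ x, 0 < f x := by
    intro x
    simp only [hf]
    split
    · next h =>
      apply div_pos
      · linarith [Int.lt_floor_add_one (a x - lam * c x)]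
      · linarith [h.1, h.2]
    · exact one_pos
  set ε₀ : ℚ := if h : c.support.Nonempty then min 1 (c.support.inf' h f) else 1 with hε₀
  have hε₀pos : 0 < ε₀ := by
    rw [hε₀]
    split
    · next h =>
      apply lt_min one_pos
      rw [Finset.lt_inf'_iff]
      intro b _
      exact hfpos b
    · exact one_pos
  have hε₀le1 : ε₀ ≤ 1 := by
    rw [hε₀]; split
    · exact min_le_left _ _
    · exact le_refl 1
  refine ⟨ε₀, hε₀pos, ?_⟩
  intro ε hε hεle x
  have hε1 : ε ≤ 1 := hεle.trans hε₀le1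
  set t : ℚ := a x - lam * c x with ht
  rcases le_or_gt 0 t with h0t | h0t
  · -- both sides are 0
    have h1 : (0 : ℤ) ≤ ⌈t + ε * c x⌉ := by
      apply Int.ceil_nonneg
      have : 0 ≤ ε * c x := mul_nonneg hε.le (hc x)
      linarith
    have h2 : (0 : ℤ) ≤ ⌈(1 - ε) * t⌉ := by
      apply Int.ceil_nonneg
      apply mul_nonneg (by linarith) h0t
    rw [min_eq_right h1, min_eq_right h2]
  · rcases eq_or_lt_of_le (hc x) with hcx | hcx
    · -- c x = 0, so t = a x ∈ (-1, 0)
      have hcx' : c x = 0 := hcx.symm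
      have hax : -1 < a x := ha x hcx'
      have hta : t = a x := by rw [ht, hcx']; ring
      have hL : ⌈t + ε * c x⌉ = 0 := by
        rw [Int.ceil_eq_iff]
        rw [hcx']
        constructor
        · push_cast; rw [hta] at *; linarith
        · push_cast; linarith
      have hR : ⌈(1 - ε) * t⌉ = 0 := by
        rw [Int.ceil_eq_iff]
        constructor
        · push_cast
          nlinarith
        · push_cast
          nlinarith
      rw [hL, hR]
    · -- c x > 0 and t < 0
      have hxS : x ∈ c.support := Finsupp.mem_support_iff.mpr (ne_of_gt hcx)
      have hne : c.support.Nonempty := ⟨x, hxS⟩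
      have hεfx : ε ≤ f x := by
        calc ε ≤ ε₀ := hεle
        _ ≤ c.support.inf' hne f := by
            rw [hε₀, dif_pos hne]; exact min_le_right _ _
        _ ≤ f x := Finset.inf'_le f hxS
      have hfx : f x = ((⌊t⌋ : ℚ) + 1 - t) / (c x - t) := by
        rw [hf]
        simp only [← ht]
        rw [if_pos ⟨hcx, h0t⟩]
      rw [hfx] at hεfx
      have hden : 0 < c x - t := by linarith
      have hkey : ε * (c x - t) ≤ (⌊t⌋ : ℚ) + 1 - t := by
        rw [div_eq_mul_inv] at hεfx
        calc ε * (c x - t) ≤ (((⌊t⌋ : ℚ) + 1 - t) * (c x - t)⁻¹) * (c x - t) :=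
              mul_le_mul_of_nonneg_right hεfx hden.le
        _ = (⌊t⌋ : ℚ) + 1 - t := by field_simp
      have hL : ⌈t + ε * c x⌉ = ⌊t⌋ + 1 := by
        apply ceil_add_small_aux
        · exact mul_pos hε hcx
        · nlinarith
      have hR : ⌈(1 - ε) * t⌉ = ⌊t⌋ + 1 := by
        have : (1 - ε) * t = t + ε * (-t) := by ring
        rw [this]
        apply ceil_add_small_aux
        · exact mul_pos hε (by linarith)
        · nlinarith
      rw [hL, hR]
end
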